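/- Let ρ ∈ ℝ, ρ ≠ 0, and z₀ ∈ E. The function F_ρ(x) = [Tx,Tx]_K + ρ·[Vx−z₀,Vx−z₀]_E attains a global minimum on H if and only if T^#T + ρ·V^#V is positive semidefinite on H and V^#z₀ lies in the range of T^#T + ρ·V^#V. -/

import Mathlib

/-!
Expanding the indefinite inner products, `F_ρ(x) = Re⟪Ax, x⟫ - 2 Re⟪b, x⟫ + const` with the
self-adjoint operator `A = T^#T + ρ V^#V` and `b = ρ V^# z₀`. If `x` minimizes this, then along
every line `t ↦ x + t w` the real quadratic `t² Re⟪Aw, w⟫ + 2t Re⟪Ax - b, w⟫` is nonnegative, so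
its discriminant vanishes: `Re⟪Ax - b, w⟫ = 0` for all `w` (hence `Ax = b`) and `⟪Aw, w⟫ ≥ 0`.
Conversely, if `A ≥ 0` and `Ax = b`, then `F_ρ(x + w) - F_ρ(x) = ⟪Aw, w⟫ ≥ 0`. Since `ρ ≠ 0`,
`b` lies in the range of `A` exactly when `V^# z₀` does.
-/

open scoped ComplexInnerProductSpace Pointwise

noncomputable section

variable {H K E : Type*}
  [NormedAddCommGroup H] [InnerProductSpace ℂ H] [CompleteSpace H]
  [NormedAddCommGroup K] [InnerProductSpace ℂ K] [CompleteSpace K]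
  [NormedAddCommGroup E] [InnerProductSpace ℂ E] [CompleteSpace E]

/-- The operator `T^#T + ρ·V^#V = T*∘J_K∘T + ρ·V*∘J_E∘V` on `H`. -/
def smOp (JK : K →L[ℂ] K) (JE : E →L[ℂ] E) (T : H →L[ℂ] K) (V : H →L[ℂ] E) (ρ : ℝ) :
    H →L[ℂ] H :=
  (ContinuousLinearMap.adjoint T) ∘L JK ∘L T +
    (ρ : ℂ) • ((ContinuousLinearMap.adjoint V) ∘L JE ∘L V)

/-- An operator on `H` is positive semidefinite if its quadratic form `⟨Ax,x⟩` is real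
and nonnegative for every `x`. -/
def IsPosSemidef (A : H →L[ℂ] H) : Prop :=
  ∀ x : H, (⟪A x, x⟫).im = 0 ∧ 0 ≤ (⟪A x, x⟫).re

/-- `sm(ρ,z₀)`: the set of global minimizers of
`F_ρ(x) = [Tx,Tx]_K + ρ·[Vx−z₀,Vx−z₀]_E` over `H`. -/
def smSet (JK : K →L[ℂ] K) (JE : E →L[ℂ] E) (T : H →L[ℂ] K) (V : H →L[ℂ] E) (ρ : ℝ)
    (z₀ : E) : Set H :=
  {xt : H | ∀ x : H,
    (⟪JK (T xt), T xt⟫).re + ρ * (⟪JE (V xt - z₀), V xt - z₀⟫).re ≤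
      (⟪JK (T x), T x⟫).re + ρ * (⟪JE (V x - z₀), V x - z₀⟫).re}

/-- `sp(w₀)`: the set of minimizers of `x ↦ [Tx,Tx]_K` subject to `Vx = w₀`. -/
def spSet (JK : K →L[ℂ] K) (T : H →L[ℂ] K) (V : H →L[ℂ] E) (w₀ : E) : Set H :=
  {xt : H | V xt = w₀ ∧ ∀ x : H, V x = w₀ →
    (⟪JK (T xt), T xt⟫).re ≤ (⟪JK (T x), T x⟫).re}

/-- `R(L)^[⊥]`: the `[·,·]_ρ`-orthogonal companion of the range of `L = (T,V)`. -/
def RLperp (JK : K →L[ℂ] K) (JE : E →L[ℂ] E) (T : H →L[ℂ] K) (V : H →L[ℂ] E) (ρ : ℝ) :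
    Set (K × E) :=
  {p : K × E | ∀ x : H, ⟪JK (T x), p.1⟫ + (ρ : ℂ) * ⟪JE (V x), p.2⟫ = 0}

/-- `N₀ = ker V ∩ ((T^#T)(ker V))^⊥`. -/
def N0 (JK : K →L[ℂ] K) (T : H →L[ℂ] K) (V : H →L[ℂ] E) : Submodule ℂ H :=
  LinearMap.ker (V : H →ₗ[ℂ] E) ⊓
    (Submodule.map (((ContinuousLinearMap.adjoint T) ∘L JK ∘L T : H →L[ℂ] H) : H →ₗ[ℂ] H)
      (LinearMap.ker (V : H →ₗ[ℂ] E)))ᗮ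


open RCLike
open scoped InnerProductSpace

section QuadraticObjective

variable {𝕜 G : Type*} [RCLike 𝕜] [NormedAddCommGroup G] [InnerProductSpace 𝕜 G]

def quadraticObjective (A : G →ₗ[𝕜] G) (b x : G) : ℝ :=
  re ⟪A x, x⟫_𝕜 - 2 * re ⟪b, x⟫_𝕜

namespace LinearMap.IsSymmetric

variable {A : G →ₗ[𝕜] G}

theorem quadraticObjective_add (hA : A.IsSymmetric) (b x w : G) :
    quadraticObjective A b (x + w) =
      quadraticObjective A b x + re ⟪A w, w⟫_𝕜 + 2 * re ⟪A x - b, w⟫_𝕜 := by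
  have hcross : re ⟪A w, x⟫_𝕜 = re ⟪A x, w⟫_𝕜 := by
    rw [hA, ← inner_conj_symm, conj_re]
  simp only [quadraticObjective, map_add, inner_add_left, inner_add_right, inner_sub_left,
    map_sub]
  linarith

theorem exists_forall_quadraticObjective_le_iff (hA : A.IsSymmetric) (b : G) :
    (∃ x, ∀ y, quadraticObjective A b x ≤ quadraticObjective A b y) ↔
      A.IsPositive ∧ b ∈ LinearMap.range A := by
  constructor
  · rintro ⟨x, hx⟩
    have hline : ∀ w, re ⟪A x - b, w⟫_𝕜 = 0 ∧ 0 ≤ re ⟪A w, w⟫_𝕜 := fun w => by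
      have hquad : ∀ t : ℝ,
          0 ≤ re ⟪A w, w⟫_𝕜 * (t * t) + 2 * re ⟪A x - b, w⟫_𝕜 * t + 0 := fun t => by
        have := hx (x + (t : 𝕜) • w)
        rw [hA.quadraticObjective_add, map_smul, inner_smul_real_left, inner_smul_real_right,
          inner_smul_real_right] at this
        simp only [real_smul_eq_coe_mul, re_ofReal_mul] at this
        linarith
      have hdisc := discrim_le_zero hquad
      have hc : re ⟪A x - b, w⟫_𝕜 = 0 := by
        rw [discrim] at hdisc
        nlinarith
      exact ⟨hc, by simpa [hc] using hquad 1⟩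
    refine ⟨⟨hA, fun w => (hline w).2⟩, x, ?_⟩
    have hnorm := (hline (A x - b)).1
    rw [inner_self_eq_norm_sq, sq_eq_zero_iff, norm_eq_zero, sub_eq_zero] at hnorm
    exact hnorm
  · rintro ⟨hpos, x, rfl⟩
    refine ⟨x, fun y => ?_⟩
    have := hA.quadraticObjective_add (A x) x (y - x)
    rw [add_sub_cancel, sub_self, inner_zero_left, map_zero] at this
    linarith [hpos.2 (y - x)]

end LinearMap.IsSymmetric

end QuadraticObjective

theorem isSelfAdjoint_smOp {JK : K →L[ℂ] K} {JE : E →L[ℂ] E} (hJK : IsSelfAdjoint JK)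
    (hJE : IsSelfAdjoint JE) (T : H →L[ℂ] K) (V : H →L[ℂ] E) (ρ : ℝ) :
    IsSelfAdjoint (smOp JK JE T V ρ) := by
  have hρ : IsSelfAdjoint (ρ : ℂ) := Complex.conj_ofReal ρ
  exact (hJK.adjoint_conj T).add (hρ.smul (hJE.adjoint_conj V))

theorem isPosSemidef_iff_isPositive {A : H →L[ℂ] H} (hA : IsSelfAdjoint A) :
    IsPosSemidef A ↔ (A : H →ₗ[ℂ] H).IsPositive :=
  ⟨fun h => ⟨hA.isSymmetric, fun x => (h x).2⟩,
    fun h x => ⟨h.isSymmetric.im_inner_apply_self x, h.2 x⟩⟩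

theorem kreinObjective_eq_quadraticObjective_add {JE : E →L[ℂ] E} (hJE : IsSelfAdjoint JE)
    (JK : K →L[ℂ] K) (T : H →L[ℂ] K) (V : H →L[ℂ] E) (ρ : ℝ) (z₀ : E) (x : H) :
    (⟪JK (T x), T x⟫).re + ρ * (⟪JE (V x - z₀), V x - z₀⟫).re =
      quadraticObjective (smOp JK JE T V ρ : H →ₗ[ℂ] H)
        ((ρ : ℂ) • ContinuousLinearMap.adjoint V (JE z₀)) x + ρ * (⟪JE z₀, z₀⟫).re := by
  have hcross : (⟪JE (V x), z₀⟫).re = (⟪JE z₀, V x⟫).re := by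
    nth_rw 1 [← hJE.adjoint_eq]
    rw [ContinuousLinearMap.adjoint_inner_left, ← inner_conj_symm, Complex.conj_re]
  simp only [quadraticObjective, smOp, ContinuousLinearMap.coe_coe, add_apply,
    ContinuousLinearMap.comp_apply, smul_apply, inner_add_left,
    inner_smul_left, Complex.conj_ofReal, ContinuousLinearMap.adjoint_inner_left, map_sub,
    inner_sub_left, inner_sub_right, re_to_complex, Complex.add_re, Complex.sub_re,
    Complex.re_ofReal_mul, hcross]
  ring

theorem smSet_nonempty_iff {JE : E →L[ℂ] E} (hJE : IsSelfAdjoint JE) (JK : K →L[ℂ] K)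
    (T : H →L[ℂ] K) (V : H →L[ℂ] E) (ρ : ℝ) (z₀ : E) :
    (smSet JK JE T V ρ z₀).Nonempty ↔
      ∃ x, ∀ y, quadraticObjective (smOp JK JE T V ρ : H →ₗ[ℂ] H)
        ((ρ : ℂ) • ContinuousLinearMap.adjoint V (JE z₀)) x ≤
        quadraticObjective (smOp JK JE T V ρ : H →ₗ[ℂ] H)
        ((ρ : ℂ) • ContinuousLinearMap.adjoint V (JE z₀)) y := by
  simp only [Set.Nonempty, smSet, Set.mem_ofPred_eq,
    kreinObjective_eq_quadraticObjective_add hJE, add_le_add_iff_right]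

theorem stmt2_general
    (JK : K →L[ℂ] K) (hJKsa : IsSelfAdjoint JK)
    (JE : E →L[ℂ] E) (hJEsa : IsSelfAdjoint JE)
    (T : H →L[ℂ] K) (V : H →L[ℂ] E)
    (ρ : ℝ) (hρ : ρ ≠ 0) (z₀ : E) :
    (smSet JK JE T V ρ z₀).Nonempty ↔
      (IsPosSemidef (smOp JK JE T V ρ) ∧
        ∃ x : H, smOp JK JE T V ρ x = (ContinuousLinearMap.adjoint V) (JE z₀)) := by
  have hA := isSelfAdjoint_smOp hJKsa hJEsa T V ρ
  rw [smSet_nonempty_iff hJEsa, hA.isSymmetric.exists_forall_quadraticObjective_le_iff,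
    isPosSemidef_iff_isPositive hA, Submodule.smul_mem_iff _ (by exact_mod_cast hρ),
    LinearMap.mem_range]
  rfl

theorem stmt2
    (JK : K →L[ℂ] K) (hJKsa : IsSelfAdjoint JK) (hJK2 : JK ∘L JK = 1)
    (JE : E →L[ℂ] E) (hJEsa : IsSelfAdjoint JE) (hJE2 : JE ∘L JE = 1)
    (T : H →L[ℂ] K) (V : H →L[ℂ] E)
    (hT : Function.Surjective T) (hV : Function.Surjective V)
    (ρ : ℝ) (hρ : ρ ≠ 0) (z₀ : E) :
    (smSet JK JE T V ρ z₀).Nonempty ↔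
      (IsPosSemidef (smOp JK JE T V ρ) ∧
        ∃ x : H, smOp JK JE T V ρ x = (ContinuousLinearMap.adjoint V) (JE z₀)) :=
  stmt2_general JK hJKsa JE hJEsa T V ρ hρ z₀
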